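/- arXiv:1008.3448 — 7 statements merged into one kernel-verified Lean document; each statement's English description precedes it below -/
import Mathlib

section
/- Let R be a semihyperring, let S be a subsemihyperring of R with 0 ∈ S, and let I be a hyperideal of R. Then (1) S + I = ⋃_{s∈S, i∈I} (s + i) is a subsemihyperring of R, and (2) S ∩ I is a hyperideal of the semihyperring S (i.e., S ∩ I is nonempty, a + b ⊆ S ∩ I for all a, b ∈ S ∩ I, and s·a ∈ S ∩ I and a·s ∈ S ∩ I for all a ∈ S ∩ I and s ∈ S). -/
/-- A semihyperring `(R, +, ·, 0)`: `+` is a hyperoperation (into nonempty sets),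
`·` is an associative single-valued multiplication distributing over `+`,
and `0` is an additive identity and multiplicative absorbing element. -/
class Semihyperring (R : Type*) extends Mul R, Zero R where
  /-- hyperaddition -/
  hadd : R → R → Set R
  hadd_nonempty : ∀ a b : R, (hadd a b).Nonempty
  hadd_comm : ∀ a b : R, hadd a b = hadd b a
  hadd_assoc : ∀ a b c : R, (⋃ x ∈ hadd a b, hadd x c) = ⋃ x ∈ hadd b c, hadd a x
  hadd_zero : ∀ a : R, hadd a 0 = {a}
  mul_assoc' : ∀ a b c : R, a * b * c = a * (b * c)
  left_distrib' : ∀ a b c : R, (fun x => a * x) '' hadd b c = hadd (a * b) (a * c)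
  right_distrib' : ∀ a b c : R, (fun x => x * c) '' hadd a b = hadd (a * c) (b * c)
  mul_zero' : ∀ a : R, a * 0 = 0
  zero_mul' : ∀ a : R, 0 * a = 0

namespace Semihyperring

variable {R : Type*} [Semihyperring R]

/-- Hyperaddition extended to sets: `A + B = ⋃_{a∈A, b∈B} (a + b)`. -/
def hAddSet (A B : Set R) : Set R := ⋃ a ∈ A, ⋃ b ∈ B, hadd a b

/-- The hypersum `x₁ + x₂ + ⋯ + xₙ` of a list of elements (as a set);
the empty hypersum is `{0}`, so `hSum [x] = {x}`. -/
def hSum : List R → Set R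
  | [] => {0}
  | x :: xs => hAddSet {x} (hSum xs)

/-- A left hyperideal. -/
def IsLeftHyperideal (I : Set R) : Prop :=
  I.Nonempty ∧ (∀ a ∈ I, ∀ b ∈ I, hadd a b ⊆ I) ∧ ∀ a ∈ I, ∀ r : R, r * a ∈ I

/-- A right hyperideal. -/
def IsRightHyperideal (I : Set R) : Prop :=
  I.Nonempty ∧ (∀ a ∈ I, ∀ b ∈ I, hadd a b ⊆ I) ∧ ∀ a ∈ I, ∀ r : R, a * r ∈ I

/-- A (two-sided) hyperideal. -/
def IsHyperideal (I : Set R) : Prop :=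
  I.Nonempty ∧ (∀ a ∈ I, ∀ b ∈ I, hadd a b ⊆ I) ∧ ∀ a ∈ I, ∀ r : R, r * a ∈ I ∧ a * r ∈ I

/-- The product `HK`: union of all finite hypersums `a₁·b₁ + ⋯ + aₙ·bₙ` (n ≥ 1)
with `aᵢ ∈ H`, `bᵢ ∈ K`. -/
def hProd (H K : Set R) : Set R :=
  ⋃ (l : List (R × R)) (_ : l ≠ []) (_ : ∀ p ∈ l, p.1 ∈ H ∧ p.2 ∈ K),
    hSum (l.map fun p => p.1 * p.2)

/-- The hyperideal generated by an element. -/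
def genHyperideal (a : R) : Set R := ⋂₀ {I : Set R | IsHyperideal I ∧ a ∈ I}

/-- A prime hyperideal. -/
def IsPrimeHyperideal (P : Set R) : Prop :=
  IsHyperideal P ∧
    ∀ A B : Set R, IsHyperideal A → IsHyperideal B → hProd A B ⊆ P → A ⊆ P ∨ B ⊆ P

/-- A semiprime hyperideal. -/
def IsSemiprimeHyperideal (I : Set R) : Prop :=
  IsHyperideal I ∧ ∀ H : Set R, IsHyperideal H → hProd H H ⊆ I → H ⊆ I

/-- A strongly irreducible hyperideal. -/
def IsStronglyIrreducibleHyperideal (I : Set R) : Prop :=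
  IsHyperideal I ∧
    ∀ H K : Set R, IsHyperideal H → IsHyperideal K → H ∩ K ⊆ I → H ⊆ I ∨ K ⊆ I

/-- An irreducible hyperideal. -/
def IsIrreducibleHyperideal (I : Set R) : Prop :=
  IsHyperideal I ∧
    ∀ H K : Set R, IsHyperideal H → IsHyperideal K → I = H ∩ K → I = H ∨ I = K

/-- `a·R`: the union of all finite hypersums `a·r₁ + ⋯ + a·rₙ` (n ≥ 1) with `rᵢ ∈ R`. -/
def rightMulSet (a : R) : Set R :=
  ⋃ (l : List R) (_ : l ≠ []), hSum (l.map fun r => a * r)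

end Semihyperring

open Semihyperring

/-- A subsemihyperring: a nonempty subset closed under hyperaddition and multiplication. -/
def IsSubsemihyperring {R : Type*} [Semihyperring R] (S : Set R) : Prop :=
  S.Nonempty ∧ (∀ a ∈ S, ∀ b ∈ S, hadd a b ⊆ S) ∧ ∀ a ∈ S, ∀ b ∈ S, a * b ∈ S

section Aux

variable {R : Type*} [Semihyperring R]

lemma mem_hAddSet {A B : Set R} {z : R} :
    z ∈ hAddSet A B ↔ ∃ a ∈ A, ∃ b ∈ B, z ∈ hadd a b := by
  simp [hAddSet]

lemma hAddSet_mono {A B A' B' : Set R} (hA : A ⊆ A') (hB : B ⊆ B') :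
    hAddSet A B ⊆ hAddSet A' B' := by
  intro z hz
  obtain ⟨a, ha, b, hb, hz⟩ := mem_hAddSet.mp hz
  exact mem_hAddSet.mpr ⟨a, hA ha, b, hB hb, hz⟩

lemma hAddSet_comm (A B : Set R) : hAddSet A B = hAddSet B A := by
  ext z
  simp only [mem_hAddSet]
  constructor
  · rintro ⟨a, ha, b, hb, hz⟩; exact ⟨b, hb, a, ha, by rwa [hadd_comm]⟩
  · rintro ⟨a, ha, b, hb, hz⟩; exact ⟨b, hb, a, ha, by rwa [hadd_comm]⟩

lemma hAddSet_assoc (A B C : Set R) :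
    hAddSet (hAddSet A B) C = hAddSet A (hAddSet B C) := by
  ext z
  simp only [mem_hAddSet]
  constructor
  · rintro ⟨x, ⟨a, ha, b, hb, hx⟩, c, hc, hz⟩
    have : z ∈ ⋃ t ∈ hadd a b, hadd t c := Set.mem_biUnion hx hz
    rw [hadd_assoc] at this
    obtain ⟨y, hy, hz⟩ := Set.mem_iUnion₂.mp this
    exact ⟨a, ha, y, ⟨b, hb, c, hc, hy⟩, hz⟩
  · rintro ⟨a, ha, y, ⟨b, hb, c, hc, hy⟩, hz⟩
    have : z ∈ ⋃ t ∈ hadd b c, hadd a t := Set.mem_biUnion hy hz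
    rw [← hadd_assoc] at this
    obtain ⟨x, hx, hz⟩ := Set.mem_iUnion₂.mp this
    exact ⟨x, ⟨a, ha, b, hb, hx⟩, c, hc, hz⟩

lemma hAddSet_singleton (a b : R) : hAddSet {a} {b} = hadd a b := by
  simp [hAddSet]

lemma hAddSet_closed {A B C : Set R} (hcl : ∀ a ∈ C, ∀ b ∈ C, hadd a b ⊆ C)
    (hA : A ⊆ C) (hB : B ⊆ C) : hAddSet A B ⊆ C := by
  intro z hz
  obtain ⟨a, ha, b, hb, hz⟩ := mem_hAddSet.mp hz
  exact hcl a (hA ha) b (hB hb) hz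

end Aux

/-- if `S` is a subsemihyperring (with `0 ∈ S`) and `I` a hyperideal, then
`S + I` is a subsemihyperring of `R` and `S ∩ I` is a hyperideal of `S`. -/
theorem subsemihyperring_add_and_inter {R : Type*} [Semihyperring R] (S I : Set R)
    (hS : IsSubsemihyperring S) (h0S : (0 : R) ∈ S) (hI : IsHyperideal I) :
    IsSubsemihyperring (hAddSet S I) ∧
      ((S ∩ I).Nonempty ∧ (∀ a ∈ S ∩ I, ∀ b ∈ S ∩ I, hadd a b ⊆ S ∩ I) ∧
        ∀ a ∈ S ∩ I, ∀ s ∈ S, s * a ∈ S ∩ I ∧ a * s ∈ S ∩ I) := by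
  obtain ⟨⟨i₀, hi₀⟩, hIcl, hImul⟩ := hI
  obtain ⟨-, hScl, hSmul⟩ := hS
  have h0I : (0 : R) ∈ I := by
    have := (hImul i₀ hi₀ 0).1
    rwa [zero_mul'] at this
  constructor
  · refine ⟨?_, ?_, ?_⟩
    · obtain ⟨z, hz⟩ := hadd_nonempty (0 : R) i₀
      exact ⟨z, mem_hAddSet.mpr ⟨0, h0S, i₀, hi₀, hz⟩⟩
    · intro x hx y hy
      obtain ⟨s₁, hs₁, i₁, hi₁, hx⟩ := mem_hAddSet.mp hx
      obtain ⟨s₂, hs₂, i₂, hi₂, hy⟩ := mem_hAddSet.mp hy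
      intro z hz
      have hz' : z ∈ hAddSet (hAddSet {s₁} {i₁}) (hAddSet {s₂} {i₂}) := by
        rw [hAddSet_singleton, hAddSet_singleton]
        exact mem_hAddSet.mpr ⟨x, hx, y, hy, hz⟩
      have heq : hAddSet (hAddSet {s₁} {i₁}) (hAddSet {s₂} {i₂})
          = hAddSet (hAddSet {s₁} {s₂}) (hAddSet {i₁} {i₂}) := by
        rw [hAddSet_assoc, hAddSet_assoc, ← hAddSet_assoc ({i₁} : Set R),
          hAddSet_comm ({i₁} : Set R) ({s₂} : Set R), hAddSet_assoc]
      rw [heq, hAddSet_singleton, hAddSet_singleton] at hz'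
      exact hAddSet_mono (hScl s₁ hs₁ s₂ hs₂) (hIcl i₁ hi₁ i₂ hi₂) hz'
    · intro x hx y hy
      obtain ⟨s₁, hs₁, i₁, hi₁, hx⟩ := mem_hAddSet.mp hx
      obtain ⟨s₂, hs₂, i₂, hi₂, hy⟩ := mem_hAddSet.mp hy
      -- x * y ∈ hadd (x*s₂) (x*i₂)
      have h1 : x * y ∈ hadd (x * s₂) (x * i₂) := by
        rw [← left_distrib']
        exact ⟨y, hy, rfl⟩
      have h2 : x * s₂ ∈ hadd (s₁ * s₂) (i₁ * s₂) := by
        rw [← right_distrib']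
        exact ⟨x, hx, rfl⟩
      have h3 : x * i₂ ∈ hadd (s₁ * i₂) (i₁ * i₂) := by
        rw [← right_distrib']
        exact ⟨x, hx, rfl⟩
      have h4 : x * y ∈ hAddSet (hAddSet {s₁ * s₂} {i₁ * s₂})
          (hAddSet {s₁ * i₂} {i₁ * i₂}) := by
        rw [hAddSet_singleton, hAddSet_singleton]
        exact mem_hAddSet.mpr ⟨_, h2, _, h3, h1⟩
      rw [hAddSet_assoc] at h4
      refine hAddSet_mono (Set.singleton_subset_iff.mpr (hSmul s₁ hs₁ s₂ hs₂)) ?_ h4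
      exact hAddSet_closed hIcl (Set.singleton_subset_iff.mpr (hImul i₁ hi₁ s₂).2)
        (hAddSet_closed hIcl (Set.singleton_subset_iff.mpr (hImul i₂ hi₂ s₁).1)
          (Set.singleton_subset_iff.mpr (hImul i₂ hi₂ i₁).1))
  · refine ⟨⟨0, h0S, h0I⟩, ?_, ?_⟩
    · rintro a ⟨haS, haI⟩ b ⟨hbS, hbI⟩
      exact Set.subset_inter (hScl a haS b hbS) (hIcl a haI b hbI)
    · rintro a ⟨haS, haI⟩ s hs
      exact ⟨⟨hSmul s hs a haS, (hImul a haI s).1⟩, ⟨hSmul a haS s hs, (hImul a haI s).2⟩⟩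
end

section
/- Let R be a semihyperring with a multiplicative identity 1. Then the following are equivalent: (1) R is multiplicatively regular, i.e., for every a ∈ R there exists b ∈ R with a = a·b·a; (2) H ∩ I = HI for every right hyperideal H and every left hyperideal I of R, where HI = ⋃ { a₁·b₁ + a₂·b₂ + ⋯ + aₙ·bₙ : n ≥ 1, aᵢ ∈ H, bᵢ ∈ I } is the union of all finite hypersums of products. -/
namespace Semihyperring

variable {R : Type*} [Semihyperring R]

lemma mem_hAddSet {A B : Set R} {x : R} :
    x ∈ hAddSet A B ↔ ∃ a ∈ A, ∃ b ∈ B, x ∈ hadd a b := by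
  simp [hAddSet]

lemma hadd_subset_hAddSet {A B : Set R} {u v : R} (hu : u ∈ A) (hv : v ∈ B) :
    hadd u v ⊆ hAddSet A B := fun z hz => mem_hAddSet.2 ⟨u, hu, v, hv, hz⟩

lemma hAddSet_assoc' (A B C : Set R) :
    hAddSet (hAddSet A B) C = hAddSet A (hAddSet B C) := by
  ext x
  simp only [hAddSet, Set.mem_iUnion, exists_prop]
  constructor
  · rintro ⟨u, ⟨a, ha, b, hb, hu⟩, c, hc, hx⟩
    have h1 : x ∈ ⋃ y ∈ hadd a b, hadd y c :=
      Set.mem_iUnion.2 ⟨u, Set.mem_iUnion.2 ⟨hu, hx⟩⟩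
    rw [hadd_assoc] at h1
    simp only [Set.mem_iUnion, exists_prop] at h1
    obtain ⟨v, hv, hx'⟩ := h1
    exact ⟨a, ha, v, ⟨b, hb, c, hc, hv⟩, hx'⟩
  · rintro ⟨a, ha, v, ⟨b, hb, c, hc, hv⟩, hx⟩
    have h1 : x ∈ ⋃ y ∈ hadd b c, hadd a y :=
      Set.mem_iUnion.2 ⟨v, Set.mem_iUnion.2 ⟨hv, hx⟩⟩
    rw [← hadd_assoc] at h1
    simp only [Set.mem_iUnion, exists_prop] at h1
    obtain ⟨u, hu, hx'⟩ := h1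
    exact ⟨u, ⟨a, ha, b, hb, hu⟩, c, hc, hx'⟩

lemma hAddSet_zero_left (S : Set R) : hAddSet {(0 : R)} S = S := by
  ext x
  simp only [hAddSet, Set.mem_iUnion, exists_prop, Set.mem_singleton_iff]
  constructor
  · rintro ⟨a, rfl, b, hb, hx⟩
    rw [hadd_comm, hadd_zero] at hx
    rwa [hx]
  · intro hx
    exact ⟨0, rfl, x, hx, by rw [hadd_comm, hadd_zero]; rfl⟩

lemma hSum_singleton (x : R) : hSum [x] = {x} := by
  show hAddSet {x} {0} = {x}
  ext y
  simp [hAddSet, hadd_zero]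

lemma hSum_append (L L' : List R) : hSum (L ++ L') = hAddSet (hSum L) (hSum L') := by
  induction L with
  | nil => simp [hSum, hAddSet_zero_left]
  | cons x xs ih =>
    show hAddSet {x} (hSum (xs ++ L')) = hAddSet (hAddSet {x} (hSum xs)) (hSum L')
    rw [ih, hAddSet_assoc']

lemma image_hAddSet (f : R → R) (A B : Set R) :
    f '' hAddSet A B = ⋃ a ∈ A, ⋃ b ∈ B, f '' hadd a b := by
  simp [hAddSet, Set.image_iUnion]

lemma image_left_hSum (c : R) (L : List R) :
    (fun x => c * x) '' hSum L = hSum (L.map fun x => c * x) := by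
  induction L with
  | nil => simp [hSum, mul_zero']
  | cons x xs ih =>
    show (fun x => c * x) '' hAddSet {x} (hSum xs) = hAddSet {c * x} (hSum (xs.map fun x => c * x))
    rw [image_hAddSet, ← ih]
    ext y
    simp only [Set.mem_iUnion, Set.mem_singleton_iff, exists_prop, hAddSet, Set.mem_image]
    constructor
    · rintro ⟨a, rfl, b, hb, w, hw, rfl⟩
      have h2 : c * w ∈ (fun x => c * x) '' hadd a b := ⟨w, hw, rfl⟩
      rw [left_distrib'] at h2
      exact ⟨c * a, rfl, c * b, ⟨b, hb, rfl⟩, h2⟩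
    · rintro ⟨a, rfl, b, ⟨b', hb', rfl⟩, hy⟩
      rw [← left_distrib'] at hy
      obtain ⟨w, hw, rfl⟩ := hy
      exact ⟨x, rfl, b', hb', w, hw, rfl⟩

lemma image_right_hSum (c : R) (L : List R) :
    (fun x => x * c) '' hSum L = hSum (L.map fun x => x * c) := by
  induction L with
  | nil => simp [hSum, zero_mul']
  | cons x xs ih =>
    show (fun x => x * c) '' hAddSet {x} (hSum xs) = hAddSet {x * c} (hSum (xs.map fun x => x * c))
    rw [image_hAddSet, ← ih]
    ext y
    simp only [Set.mem_iUnion, Set.mem_singleton_iff, exists_prop, hAddSet, Set.mem_image]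
    constructor
    · rintro ⟨a, rfl, b, hb, w, hw, rfl⟩
      have h2 : w * c ∈ (fun x => x * c) '' hadd a b := ⟨w, hw, rfl⟩
      rw [right_distrib'] at h2
      exact ⟨a * c, rfl, b * c, ⟨b, hb, rfl⟩, h2⟩
    · rintro ⟨a, rfl, b, ⟨b', hb', rfl⟩, hy⟩
      rw [← right_distrib'] at hy
      obtain ⟨w, hw, rfl⟩ := hy
      exact ⟨x, rfl, b', hb', w, hw, rfl⟩

lemma hSum_subset {S : Set R} (hcl : ∀ u ∈ S, ∀ v ∈ S, hadd u v ⊆ S) :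
    ∀ L : List R, L ≠ [] → (∀ x ∈ L, x ∈ S) → hSum L ⊆ S := by
  intro L
  induction L with
  | nil => intro h; exact absurd rfl h
  | cons x xs ih =>
    intro _ hmem
    cases xs with
    | nil =>
      rw [hSum_singleton]
      intro z hz
      rw [Set.mem_singleton_iff] at hz
      exact hz ▸ hmem x (by simp)
    | cons y ys =>
      have hsub : hSum (y :: ys) ⊆ S := ih (by simp) (fun z hz => hmem z (by simp [hz]))
      intro z hz
      obtain ⟨a, ha, b, hb, hz'⟩ := mem_hAddSet.1 hz
      rw [Set.mem_singleton_iff] at ha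
      exact hcl a (ha ▸ hmem x (by simp)) b (hsub hb) hz'

/-- `genSet f` : union of all nonempty hypersums of values of `f`. -/
def genSet (f : R → R) : Set R :=
  ⋃ (l : List R) (_ : l ≠ []), hSum (l.map f)

lemma mem_genSet {f : R → R} {x : R} :
    x ∈ genSet f ↔ ∃ l : List R, l ≠ [] ∧ x ∈ hSum (l.map f) := by
  simp [genSet]

lemma genSet_closed (f : R → R) :
    ∀ u ∈ genSet f, ∀ v ∈ genSet f, hadd u v ⊆ genSet f := by
  intro u hu v hv
  obtain ⟨l, hl, hu'⟩ := mem_genSet.1 hu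
  obtain ⟨l', hl', hv'⟩ := mem_genSet.1 hv
  intro z hz
  refine mem_genSet.2 ⟨l ++ l', by simp [hl], ?_⟩
  rw [List.map_append, hSum_append]
  exact hadd_subset_hAddSet hu' hv' hz

lemma mem_genSet_self (f : R → R) (r : R) : f r ∈ genSet f :=
  mem_genSet.2 ⟨[r], by simp, by simp [hSum_singleton]⟩

lemma hSum_subset_genSet {f : R → R} {L : List R} (hL : L ≠ [])
    (h : ∀ x ∈ L, x ∈ genSet f) : hSum L ⊆ genSet f :=
  hSum_subset (genSet_closed f) L hL h

end Semihyperring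

open Semihyperring

/-- a semihyperring with identity is multiplicatively regular iff
`H ∩ I = HI` for every right hyperideal `H` and left hyperideal `I`. -/
theorem regular_iff_inter_eq_prod {R : Type*} [Semihyperring R]
    (one : R) (hone : ∀ x : R, one * x = x ∧ x * one = x) :
    (∀ a : R, ∃ b : R, a = a * b * a) ↔
      ∀ H I : Set R, IsRightHyperideal H → IsLeftHyperideal I → H ∩ I = hProd H I := by
  constructor
  · intro hreg H I hH hI
    ext x
    constructor
    · rintro ⟨hxH, hxI⟩
      obtain ⟨b, hb⟩ := hreg x
      refine Set.mem_iUnion.2 ⟨[(x * b, x)], Set.mem_iUnion.2 ⟨by simp,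
        Set.mem_iUnion.2 ⟨?_, ?_⟩⟩⟩
      · intro p hp
        simp only [List.mem_singleton] at hp
        subst hp
        exact ⟨hH.2.2 x hxH b, hxI⟩
      · simp only [List.map]
        rw [hSum_singleton]
        exact hb
    · intro hx
      simp only [hProd, Set.mem_iUnion] at hx
      obtain ⟨l, hl, hmem, hx⟩ := hx
      refine hSum_subset ?_ _ (by simp [hl]) ?_ hx
      · intro u hu v hv
        exact Set.subset_inter (fun z hz => hH.2.1 u hu.1 v hv.1 hz)
          (fun z hz => hI.2.1 u hu.2 v hv.2 hz)
      · intro y hy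
        obtain ⟨p, hp, rfl⟩ := List.mem_map.1 hy
        exact ⟨hH.2.2 p.1 (hmem p hp).1 p.2, hI.2.2 p.2 (hmem p hp).2 p.1⟩
  · intro hprod a
    have hH : IsRightHyperideal (genSet (fun r => a * r)) := by
      refine ⟨⟨a * a, mem_genSet_self _ a⟩, genSet_closed _, ?_⟩
      intro u hu s
      obtain ⟨l, hl, hu'⟩ := mem_genSet.1 hu
      have h1 : u * s ∈ (fun x => x * s) '' hSum (l.map fun r => a * r) := ⟨u, hu', rfl⟩
      rw [image_right_hSum, List.map_map] at h1
      refine mem_genSet.2 ⟨l.map (fun r => r * s), by simp [hl], ?_⟩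
      rw [List.map_map]
      have heq : ((fun r => a * r) ∘ fun r => r * s) = ((fun x => x * s) ∘ fun r => a * r) := by
        funext r
        simp only [Function.comp, mul_assoc']
      rw [heq]
      exact h1
    have hI : IsLeftHyperideal (genSet (fun r => r * a)) := by
      refine ⟨⟨a * a, mem_genSet_self _ a⟩, genSet_closed _, ?_⟩
      intro u hu s
      obtain ⟨l, hl, hu'⟩ := mem_genSet.1 hu
      have h1 : s * u ∈ (fun x => s * x) '' hSum (l.map fun r => r * a) := ⟨u, hu', rfl⟩
      rw [image_left_hSum, List.map_map] at h1
      refine mem_genSet.2 ⟨l.map (fun r => s * r), by simp [hl], ?_⟩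
      rw [List.map_map]
      have heq : ((fun r => r * a) ∘ fun r => s * r) = ((fun x => s * x) ∘ fun r => r * a) := by
        funext r
        simp only [Function.comp, mul_assoc']
      rw [heq]
      exact h1
    have haH : a ∈ genSet (fun r => a * r) :=
      mem_genSet.2 ⟨[one], by simp, by
        simp only [List.map]
        rw [hSum_singleton, (hone a).2]
        rfl⟩
    have haI : a ∈ genSet (fun r => r * a) :=
      mem_genSet.2 ⟨[one], by simp, by
        simp only [List.map]
        rw [hSum_singleton, (hone a).1]
        rfl⟩
    have key := hprod _ _ hH hI
    have haP : a ∈ hProd (genSet (fun r => a * r)) (genSet (fun r => r * a)) :=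
      key ▸ Set.mem_inter haH haI
    simp only [hProd, Set.mem_iUnion] at haP
    obtain ⟨L, hL, hmem, haP⟩ := haP
    have hsub : hSum (L.map fun p => p.1 * p.2) ⊆ genSet (fun r => a * r * a) := by
      refine hSum_subset_genSet (by simp [hL]) ?_
      intro y hy
      obtain ⟨p, hp, rfl⟩ := List.mem_map.1 hy
      obtain ⟨hp1, hp2⟩ := hmem p hp
      obtain ⟨l₁, hl₁, h1⟩ := mem_genSet.1 hp1
      obtain ⟨l₂, hl₂, h2⟩ := mem_genSet.1 hp2
      have e1 : p.1 * p.2 ∈ hSum (l₁.map fun r => a * r * p.2) := by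
        have h3 : p.1 * p.2 ∈ (fun x => x * p.2) '' hSum (l₁.map fun r => a * r) :=
          ⟨p.1, h1, rfl⟩
        rw [image_right_hSum, List.map_map] at h3
        exact h3
      refine hSum_subset_genSet (by simp [hl₁]) ?_ e1
      intro y' hy'
      obtain ⟨r, hr, rfl⟩ := List.mem_map.1 hy'
      have e2 : a * r * p.2 ∈ hSum (l₂.map fun s => a * r * (s * a)) := by
        have h3 : a * r * p.2 ∈ (fun x => a * r * x) '' hSum (l₂.map fun s => s * a) :=
          ⟨p.2, h2, rfl⟩
        rw [image_left_hSum, List.map_map] at h3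
        exact h3
      refine mem_genSet.2 ⟨l₂.map (fun s => r * s), by simp [hl₂], ?_⟩
      rw [List.map_map]
      have heq : ((fun r' => a * r' * a) ∘ fun s => r * s) = (fun s => a * r * (s * a)) := by
        funext s
        simp only [Function.comp, mul_assoc']
      rw [heq]
      exact e2
    have haT := hsub haP
    obtain ⟨l, hl, hmem2⟩ := mem_genSet.1 haT
    have h4 : a ∈ (fun x => a * x) '' hSum (l.map fun r => r * a) := by
      rw [image_left_hSum, List.map_map]
      have heq : ((fun x => a * x) ∘ fun r => r * a) = (fun r => a * r * a) := by
        funext r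
        simp only [Function.comp, mul_assoc']
      rw [heq]
      exact hmem2
    obtain ⟨y, hy, hay⟩ := h4
    rw [← image_right_hSum] at hy
    obtain ⟨t, _, rfl⟩ := hy
    refine ⟨t, ?_⟩
    rw [mul_assoc']
    exact hay.symm
end

section
/- Let R be a semihyperring with a multiplicative identity 1 and let I be a hyperideal of R. Then the following are equivalent: (1) I is a prime hyperideal; (2) for all a, b ∈ R: {a·r·b : r ∈ R} ⊆ I if and only if a ∈ I or b ∈ I; (3) for all a, b ∈ R: ⟨a⟩⟨b⟩ ⊆ I implies a ∈ I or b ∈ I, where ⟨x⟩ denotes the hyperideal generated by x. -/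
/-!
If `a r b ∈ I` for every `r`, then the set of `y` with `a R y ⊆ I` is a hyperideal containing `b`,
hence contains `⟨b⟩`; likewise the set of `x` with `x R ⟨b⟩ ⊆ I` is a hyperideal containing `a`,
hence contains `⟨a⟩`. With an identity this gives `⟨a⟩ ⟨b⟩ ⊆ I`, which turns condition (3) into
condition (2); (2) gives primality by picking `a ∈ A \ I`, `b ∈ B \ I` and noting `a r b ∈ AB`,
and primality gives (3) because `⟨a⟩`, `⟨b⟩` are hyperideals containing `a`, `b`.
-/

namespace Semihyperring

variable {R : Type*} [Semihyperring R]

lemma mul_left_mem_hadd {x y z : R} (c : R) (hz : z ∈ hadd x y) :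
    c * z ∈ hadd (c * x) (c * y) :=
  left_distrib' c x y ▸ Set.mem_image_of_mem _ hz

lemma mul_right_mem_hadd {x y z : R} (c : R) (hz : z ∈ hadd x y) :
    z * c ∈ hadd (x * c) (y * c) :=
  right_distrib' x y c ▸ Set.mem_image_of_mem _ hz

namespace IsHyperideal

variable {I : Set R}

lemma zero_mem (hI : IsHyperideal I) : (0 : R) ∈ I := by
  obtain ⟨a, ha⟩ := hI.1
  simpa only [mul_zero'] using (hI.2.2 a ha 0).2

lemma hSum_subset (hI : IsHyperideal I) {l : List R} (hl : ∀ x ∈ l, x ∈ I) :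
    hSum l ⊆ I := by
  induction l with
  | nil => simpa only [hSum, Set.singleton_subset_iff] using hI.zero_mem
  | cons x xs ih =>
    simp only [hSum, hAddSet, Set.mem_singleton_iff, Set.iUnion_iUnion_eq_left,
      Set.iUnion₂_subset_iff]
    exact fun y hy => hI.2.1 x (hl x List.mem_cons_self) y
      (ih (fun z hz => hl z (List.mem_cons_of_mem _ hz)) hy)

lemma hProd_subset (hI : IsHyperideal I) {H K : Set R}
    (h : ∀ x ∈ H, ∀ y ∈ K, x * y ∈ I) : hProd H K ⊆ I := by
  simp only [hProd, Set.iUnion_subset_iff]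
  intro l _ hl
  refine hI.hSum_subset fun z hz => ?_
  obtain ⟨p, hp, rfl⟩ := List.mem_map.1 hz
  exact h _ (hl p hp).1 _ (hl p hp).2

lemma setOf_mul_mul_mem_right (hI : IsHyperideal I) (S : Set R) :
    IsHyperideal {y | ∀ x ∈ S, ∀ r, x * r * y ∈ I} := by
  refine ⟨⟨0, fun x _ r => by simpa only [mul_zero'] using hI.zero_mem⟩, ?_, ?_⟩
  · intro y hy y' hy' z hz x hx r
    exact hI.2.1 _ (hy x hx r) _ (hy' x hx r) (mul_left_mem_hadd (x * r) hz)
  · intro y hy s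
    refine ⟨fun x hx r => ?_, fun x hx r => ?_⟩
    · simpa only [mul_assoc'] using hy x hx (r * s)
    · simpa only [mul_assoc'] using (hI.2.2 _ (hy x hx r) s).2

lemma setOf_mul_mul_mem_left (hI : IsHyperideal I) (S : Set R) :
    IsHyperideal {x | ∀ y ∈ S, ∀ r, x * r * y ∈ I} := by
  refine ⟨⟨0, fun y _ r => by simpa only [zero_mul'] using hI.zero_mem⟩, ?_, ?_⟩
  · intro x hx x' hx' z hz y hy r
    exact hI.2.1 _ (hx y hy r) _ (hx' y hy r)
      (mul_right_mem_hadd y (mul_right_mem_hadd r hz))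
  · intro x hx s
    refine ⟨fun y hy r => ?_, fun y hy r => ?_⟩
    · simpa only [mul_assoc'] using (hI.2.2 _ (hx y hy r) s).1
    · simpa only [mul_assoc'] using hx y hy (s * r)

end IsHyperideal

lemma mem_genHyperideal_self (a : R) : a ∈ genHyperideal a :=
  fun _ hJ => hJ.2

lemma genHyperideal_subset {a : R} {J : Set R} (hJ : IsHyperideal J) (ha : a ∈ J) :
    genHyperideal a ⊆ J :=
  Set.sInter_subset_of_mem ⟨hJ, ha⟩

lemma isHyperideal_genHyperideal (a : R) : IsHyperideal (genHyperideal a) := by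
  refine ⟨⟨a, mem_genHyperideal_self a⟩, ?_, ?_⟩
  · intro x hx y hy z hz J hJ
    exact hJ.1.2.1 x (hx J hJ) y (hy J hJ) hz
  · intro x hx r
    exact ⟨fun J hJ => (hJ.1.2.2 x (hx J hJ) r).1, fun J hJ => (hJ.1.2.2 x (hx J hJ) r).2⟩

lemma mul_mem_hProd {H K : Set R} {x y : R} (hx : x ∈ H) (hy : y ∈ K) :
    x * y ∈ hProd H K := by
  simp only [hProd, Set.mem_iUnion]
  exact ⟨[(x, y)], List.cons_ne_nil _ _, by simp [hx, hy],
    by simp [hSum, hAddSet, hadd_zero]⟩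

lemma mul_mul_mem_of_mem_genHyperideal {I : Set R} (hI : IsHyperideal I) {a b : R}
    (hab : ∀ r, a * r * b ∈ I) {x y : R} (hx : x ∈ genHyperideal a)
    (hy : y ∈ genHyperideal b) (r : R) : x * r * y ∈ I := by
  have hb : genHyperideal b ⊆ {y | ∀ x ∈ ({a} : Set R), ∀ r, x * r * y ∈ I} :=
    genHyperideal_subset (hI.setOf_mul_mul_mem_right _) (by simpa using hab)
  have ha : genHyperideal a ⊆ {x | ∀ y ∈ genHyperideal b, ∀ r, x * r * y ∈ I} :=
    genHyperideal_subset (hI.setOf_mul_mul_mem_left _) fun y hy r => hb hy a rfl r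
  exact ha hx y hy r

lemma hProd_genHyperideal_subset {one : R} (hone : ∀ x : R, x * one = x)
    {I : Set R} (hI : IsHyperideal I) {a b : R} (hab : ∀ r, a * r * b ∈ I) :
    hProd (genHyperideal a) (genHyperideal b) ⊆ I :=
  hI.hProd_subset fun x hx _ hy =>
    hone x ▸ mul_mul_mem_of_mem_genHyperideal hI hab hx hy one

end Semihyperring

open Semihyperring

/-- characterizations of prime hyperideals in a semihyperring with identity. -/
theorem prime_hyperideal_tfae {R : Type*} [Semihyperring R]
    (one : R) (hone : ∀ x : R, one * x = x ∧ x * one = x)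
    (I : Set R) (hI : IsHyperideal I) :
    List.TFAE [
      IsPrimeHyperideal I,
      ∀ a b : R, (∀ r : R, a * r * b ∈ I) ↔ (a ∈ I ∨ b ∈ I),
      ∀ a b : R, hProd (genHyperideal a) (genHyperideal b) ⊆ I → a ∈ I ∨ b ∈ I ] := by
  tfae_have 1 → 3 := fun hP a b hab =>
    (hP.2 _ _ (isHyperideal_genHyperideal a) (isHyperideal_genHyperideal b) hab).imp
      (· (mem_genHyperideal_self a)) (· (mem_genHyperideal_self b))
  tfae_have 3 → 2 := by
    refine fun h3 a b =>
      ⟨fun hab => h3 a b (hProd_genHyperideal_subset (fun x => (hone x).2) hI hab), ?_⟩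
    rintro (ha | hb) r
    · exact (hI.2.2 _ (hI.2.2 a ha r).2 b).2
    · simpa only [mul_assoc'] using (hI.2.2 _ (hI.2.2 b hb r).1 a).1
  tfae_have 2 → 1 := by
    refine fun h2 => ⟨hI, fun A B hA hB hAB => ?_⟩
    by_contra! hcon
    obtain ⟨a, ha, haI⟩ := Set.not_subset.1 hcon.1
    obtain ⟨b, hb, hbI⟩ := Set.not_subset.1 hcon.2
    have hab : ∀ r, a * r * b ∈ I := fun r => hAB (mul_mem_hProd (hA.2.2 a ha r).2 hb)
    exact ((h2 a b).1 hab).elim haI hbI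
  tfae_finish
end

section
/- Let R be a semihyperring, let I be a hyperideal of R, and let H be a hyperideal of R that is minimal among the hyperideals of R properly containing I (i.e., I ⊊ H, and every hyperideal J with I ⊊ J ⊆ H equals H). Then K = {r ∈ R | r·h ∈ I for all h ∈ H} is a prime hyperideal of R. -/
open Semihyperring

namespace Semihyperring
variable {R : Type*} [Semihyperring R]

lemma zero_mem_of_isHyperideal {I : Set R} (hI : IsHyperideal I) : (0:R) ∈ I := by
  obtain ⟨⟨a, ha⟩, _, hmul⟩ := hI
  have := (hmul a ha 0).1
  rwa [zero_mul'] at this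

lemma quotRight_isHyperideal {I H : Set R} (hI : IsHyperideal I) (hH : IsHyperideal H) :
    IsHyperideal {r : R | ∀ h ∈ H, r * h ∈ I} := by
  refine ⟨⟨0, fun h hh => ?_⟩, ?_, ?_⟩
  · rw [zero_mul']; exact zero_mem_of_isHyperideal hI
  · intro a ha b hb x hx h hh
    have hx' : x * h ∈ (fun y => y * h) '' hadd a b := ⟨x, hx, rfl⟩
    rw [right_distrib'] at hx'
    exact hI.2.1 _ (ha h hh) _ (hb h hh) hx'
  · intro a ha r
    refine ⟨fun h hh => ?_, fun h hh => ?_⟩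
    · rw [mul_assoc']
      exact (hI.2.2 _ (ha h hh) r).1
    · rw [mul_assoc']
      exact ha _ ((hH.2.2 h hh r).1)

lemma quotLeft_isHyperideal {I A : Set R} (hI : IsHyperideal I) (hA : IsHyperideal A) :
    IsHyperideal {x : R | ∀ a ∈ A, a * x ∈ I} := by
  refine ⟨⟨0, fun a ha => ?_⟩, ?_, ?_⟩
  · rw [mul_zero']; exact zero_mem_of_isHyperideal hI
  · intro x hx y hy z hz a ha
    have hz' : a * z ∈ (fun w => a * w) '' hadd x y := ⟨z, hz, rfl⟩
    rw [left_distrib'] at hz'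
    exact hI.2.1 _ (hx a ha) _ (hy a ha) hz'
  · intro x hx r
    refine ⟨fun a ha => ?_, fun a ha => ?_⟩
    · rw [← mul_assoc']
      exact hx _ ((hA.2.2 a ha r).2)
    · rw [← mul_assoc']
      exact (hI.2.2 _ (hx a ha) r).2

lemma inter_isHyperideal {A B : Set R} (hA : IsHyperideal A) (hB : IsHyperideal B) :
    IsHyperideal (A ∩ B) := by
  refine ⟨⟨0, zero_mem_of_isHyperideal hA, zero_mem_of_isHyperideal hB⟩, ?_, ?_⟩
  · intro a ha b hb
    exact Set.subset_inter (hA.2.1 a ha.1 b hb.1) (hB.2.1 a ha.2 b hb.2)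
  · intro a ha r
    exact ⟨⟨(hA.2.2 a ha.1 r).1, (hB.2.2 a ha.2 r).1⟩,
      (hA.2.2 a ha.1 r).2, (hB.2.2 a ha.2 r).2⟩

lemma mul_mem_hProd_s12 {A B : Set R} {a b : R} (ha : a ∈ A) (hb : b ∈ B) :
    a * b ∈ hProd A B := by
  refine Set.mem_iUnion.mpr ⟨[(a, b)], Set.mem_iUnion.mpr ⟨by simp,
    Set.mem_iUnion.mpr ⟨by simp [ha, hb], ?_⟩⟩⟩
  simp [hSum, hAddSet, hadd_zero]

end Semihyperring


/-- if `H` is minimal among hyperideals properly containing `I`, then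
`K = {r | r·H ⊆ I}` is a prime hyperideal. -/
theorem minimal_over_quotient_isPrime {R : Type*} [Semihyperring R] (I H : Set R)
    (hI : IsHyperideal I) (hH : IsHyperideal H) (hIH : I ⊂ H)
    (hmin : ∀ J : Set R, IsHyperideal J → I ⊂ J → J ⊆ H → J = H) :
    IsPrimeHyperideal {r : R | ∀ h ∈ H, r * h ∈ I} := by
  refine ⟨quotRight_isHyperideal hI hH, ?_⟩
  intro A B hA hB hAB
  have hDideal := quotLeft_isHyperideal hI hA
  have hJideal := inter_isHyperideal hH hDideal
  have hIJ : I ⊆ H ∩ {x : R | ∀ a ∈ A, a * x ∈ I} := by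
    intro i hi
    exact ⟨hIH.1 hi, fun a ha => (hI.2.2 i hi a).1⟩
  by_cases hcase : H ∩ {x : R | ∀ a ∈ A, a * x ∈ I} = I
  · right
    intro b hb h hh
    have hmem : b * h ∈ H ∩ {x : R | ∀ a ∈ A, a * x ∈ I} := by
      refine ⟨(hH.2.2 h hh b).1, fun a ha => ?_⟩
      rw [← mul_assoc']
      exact hAB (mul_mem_hProd_s12 ha hb) h hh
    rw [hcase] at hmem
    exact hmem
  · left
    have hJH := hmin _ hJideal (hIJ.ssubset_of_ne (Ne.symm hcase)) Set.inter_subset_left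
    intro a ha h hh
    have : h ∈ H ∩ {x : R | ∀ a ∈ A, a * x ∈ I} := by rw [hJH]; exact hh
    exact this.2 a ha
end

section
/- Let R be a semihyperring, let a ∈ R with a ≠ 0, and let I be a hyperideal of R with a ∉ I. Then there exists an irreducible hyperideal H of R such that I ⊆ H and a ∉ H. -/
open Semihyperring

/-- for `a ≠ 0` and a hyperideal `I` not containing `a`, there is an
irreducible hyperideal containing `I` and not containing `a`. -/
theorem exists_irreducible_hyperideal {R : Type*} [Semihyperring R] (a : R) (ha : a ≠ 0)
    (I : Set R) (hI : IsHyperideal I) (haI : a ∉ I) :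
    ∃ H : Set R, IsIrreducibleHyperideal H ∧ I ⊆ H ∧ a ∉ H := by
  let S : Set (Set R) := {J | IsHyperideal J ∧ I ⊆ J ∧ a ∉ J}
  obtain ⟨M, hIM, hMS, hMmax⟩ : ∃ M, I ⊆ M ∧ Maximal (· ∈ S) M := by
    apply zorn_subset_nonempty S ?_ I ⟨hI, subset_rfl, haI⟩
    intro c hcS hchain hcne
    refine ⟨⋃₀ c, ⟨⟨?_, ?_, ?_⟩, ?_, ?_⟩, fun s hs => Set.subset_sUnion_of_mem hs⟩
    · obtain ⟨J, hJ⟩ := hcne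
      obtain ⟨x, hx⟩ := (hcS hJ).1.1
      exact ⟨x, J, hJ, hx⟩
    · rintro x ⟨A, hA, hxA⟩ y ⟨B, hB, hyB⟩
      rcases hchain.total hA hB with h | h
      · exact (Set.subset_sUnion_of_mem hB).trans' ((hcS hB).1.2.1 x (h hxA) y hyB)
      · exact (Set.subset_sUnion_of_mem hA).trans' ((hcS hA).1.2.1 x hxA y (h hyB))
    · rintro x ⟨A, hA, hxA⟩ r
      exact ⟨⟨A, hA, ((hcS hA).1.2.2 x hxA r).1⟩, ⟨A, hA, ((hcS hA).1.2.2 x hxA r).2⟩⟩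
    · obtain ⟨J, hJ⟩ := hcne
      exact (hcS hJ).2.1.trans (Set.subset_sUnion_of_mem hJ)
    · rintro ⟨A, hA, hxA⟩
      exact (hcS hA).2.2 hxA
  refine ⟨M, ⟨hMS.1, ?_⟩, hMS.2.1, hMS.2.2⟩
  intro H K hH hK hMHK
  by_contra hcon
  push_neg at hcon
  have hMH : M ⊆ H := hMHK ▸ Set.inter_subset_left
  have hMK : M ⊆ K := hMHK ▸ Set.inter_subset_right
  have haH : a ∈ H := by
    by_contra haH
    exact hcon.1 (hMH.antisymm (hMmax ⟨hH, hMS.2.1.trans hMH, haH⟩ hMH))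
  have haK : a ∈ K := by
    by_contra haK
    exact hcon.2 (hMK.antisymm (hMmax ⟨hK, hMS.2.1.trans hMK, haK⟩ hMK))
  exact hMS.2.2 (hMHK ▸ ⟨haH, haK⟩)
end

section
/- Let R be a semihyperring. Then every hyperideal I of R is the intersection of all irreducible hyperideals of R containing it: I = ⋂ { H : H is an irreducible hyperideal of R and I ⊆ H }. -/
open Semihyperring

/-- every hyperideal is the intersection of the irreducible hyperideals
containing it. -/
theorem hyperideal_eq_sInter_irreducible {R : Type*} [Semihyperring R]
    (I : Set R) (hI : IsHyperideal I) :
    I = ⋂₀ {H : Set R | IsIrreducibleHyperideal H ∧ I ⊆ H} := by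
  apply Set.Subset.antisymm
  · intro x hx H hH
    exact hH.2 hx
  · intro a ha
    by_contra haI
    -- Zorn: maximal hyperideal containing I not containing a
    set S : Set (Set R) := {J | IsHyperideal J ∧ I ⊆ J ∧ a ∉ J} with hS
    have hchainub : ∀ c ⊆ S, IsChain (· ⊆ ·) c → c.Nonempty →
        ∃ ub ∈ S, ∀ s ∈ c, s ⊆ ub := by
      intro c hcS hchain hcne
      refine ⟨⋃₀ c, ⟨⟨?_, ?_, ?_⟩, ?_, ?_⟩, fun s hs => Set.subset_sUnion_of_mem hs⟩
      · obtain ⟨J, hJ⟩ := hcne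
        obtain ⟨x, hx⟩ := (hcS hJ).1.1
        exact ⟨x, J, hJ, hx⟩
      · rintro x ⟨J, hJ, hxJ⟩ y ⟨K, hK, hyK⟩
        rcases hchain.total hJ hK with h | h
        · exact ((hcS hK).1.2.1 x (h hxJ) y hyK).trans (Set.subset_sUnion_of_mem hK)
        · exact ((hcS hJ).1.2.1 x hxJ y (h hyK)).trans (Set.subset_sUnion_of_mem hJ)
      · rintro x ⟨J, hJ, hxJ⟩ r
        exact ⟨⟨J, hJ, ((hcS hJ).1.2.2 x hxJ r).1⟩, ⟨J, hJ, ((hcS hJ).1.2.2 x hxJ r).2⟩⟩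
      · obtain ⟨J, hJ⟩ := hcne
        exact ((hcS hJ).2.1).trans (Set.subset_sUnion_of_mem hJ)
      · rintro ⟨J, hJ, haJ⟩
        exact (hcS hJ).2.2 haJ
    obtain ⟨M, hIM, hMS, hMmax⟩ := zorn_subset_nonempty S hchainub I ⟨hI, subset_rfl, haI⟩
    · -- M is irreducible
      have hMirr : IsIrreducibleHyperideal M := by
        refine ⟨hMS.1, ?_⟩
        intro H K hH hK hMHK
        by_contra hne
        push_neg at hne
        have hMH : M ⊆ H := hMHK ▸ Set.inter_subset_left
        have hMK : M ⊆ K := hMHK ▸ Set.inter_subset_right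
        have haH : a ∈ H := by
          by_contra h
          exact hne.1 ((hMmax ⟨hH, hIM.trans hMH, h⟩ hMH).antisymm hMH).symm
        have haK : a ∈ K := by
          by_contra h
          exact hne.2 ((hMmax ⟨hK, hIM.trans hMK, h⟩ hMK).antisymm hMK).symm
        exact hMS.2.2 (hMHK ▸ ⟨haH, haK⟩)
      exact hMS.2.2 (ha M ⟨hMirr, hMS.2.1⟩)
end

section
/- Let R be a semihyperring and let I be a hyperideal of R. Then I is a prime hyperideal if and only if I is semiprime and strongly irreducible. -/
open Semihyperring

/-! A prime hyperideal has both properties because `HK ⊆ H ∩ K` for hyperideals `H`, `K`.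
Conversely, if `AB ⊆ I` then `(A ∩ B)(A ∩ B) ⊆ AB ⊆ I`, so semiprimeness gives
`A ∩ B ⊆ I` and strong irreducibility then gives `A ⊆ I` or `B ⊆ I`. -/

namespace Semihyperring

variable {R : Type*} [Semihyperring R]

theorem IsHyperideal.isLeftHyperideal {I : Set R} (hI : IsHyperideal I) :
    IsLeftHyperideal I :=
  ⟨hI.1, hI.2.1, fun a ha r => (hI.2.2 a ha r).1⟩

theorem IsHyperideal.isRightHyperideal {I : Set R} (hI : IsHyperideal I) :
    IsRightHyperideal I :=
  ⟨hI.1, hI.2.1, fun a ha r => (hI.2.2 a ha r).2⟩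

theorem IsLeftHyperideal.zero_mem {I : Set R} (hI : IsLeftHyperideal I) : (0 : R) ∈ I := by
  obtain ⟨a, ha⟩ := hI.1
  simpa only [zero_mul'] using hI.2.2 a ha 0

theorem IsRightHyperideal.zero_mem {I : Set R} (hI : IsRightHyperideal I) : (0 : R) ∈ I := by
  obtain ⟨a, ha⟩ := hI.1
  simpa only [mul_zero'] using hI.2.2 a ha 0

theorem hSum_subset_s18 {I : Set R} (h0 : (0 : R) ∈ I)
    (hadd_subset : ∀ a ∈ I, ∀ b ∈ I, hadd a b ⊆ I) :
    ∀ l : List R, (∀ x ∈ l, x ∈ I) → hSum l ⊆ I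
  | [], _ => by simpa only [hSum, Set.singleton_subset_iff] using h0
  | x :: xs, hl => by
    intro y hy
    simp only [hSum, hAddSet, Set.mem_iUnion, Set.mem_singleton_iff] at hy
    obtain ⟨a, rfl, b, hb, hyb⟩ := hy
    have hxs : hSum xs ⊆ I := hSum_subset_s18 h0 hadd_subset xs fun z hz => hl z (.tail a hz)
    exact hadd_subset a (hl a List.mem_cons_self) b (hxs hb) hyb

theorem hProd_mono {A A' B B' : Set R} (hA : A ⊆ A') (hB : B ⊆ B') :
    hProd A B ⊆ hProd A' B' := by
  intro y hy
  simp only [hProd, Set.mem_iUnion] at hy ⊢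
  obtain ⟨l, hl, hmem, hy⟩ := hy
  exact ⟨l, hl, fun p hp => ⟨hA (hmem p hp).1, hB (hmem p hp).2⟩, hy⟩

theorem hProd_subset_left {H : Set R} (hH : IsRightHyperideal H) (K : Set R) :
    hProd H K ⊆ H := by
  simp only [hProd, Set.iUnion_subset_iff]
  intro l _ hmem
  refine hSum_subset_s18 hH.zero_mem hH.2.1 _ fun x hx => ?_
  obtain ⟨p, hp, rfl⟩ := List.mem_map.1 hx
  exact hH.2.2 p.1 (hmem p hp).1 p.2

theorem hProd_subset_right (H : Set R) {K : Set R} (hK : IsLeftHyperideal K) :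
    hProd H K ⊆ K := by
  simp only [hProd, Set.iUnion_subset_iff]
  intro l _ hmem
  refine hSum_subset_s18 hK.zero_mem hK.2.1 _ fun x hx => ?_
  obtain ⟨p, hp, rfl⟩ := List.mem_map.1 hx
  exact hK.2.2 p.2 (hmem p hp).2 p.1

theorem hProd_subset_inter {H K : Set R} (hH : IsRightHyperideal H) (hK : IsLeftHyperideal K) :
    hProd H K ⊆ H ∩ K :=
  Set.subset_inter (hProd_subset_left hH K) (hProd_subset_right H hK)

theorem IsHyperideal.inter {H K : Set R} (hH : IsHyperideal H) (hK : IsHyperideal K) :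
    IsHyperideal (H ∩ K) := by
  refine ⟨⟨0, hH.isLeftHyperideal.zero_mem, hK.isLeftHyperideal.zero_mem⟩, ?_, ?_⟩
  · intro a ha b hb
    exact Set.subset_inter (hH.2.1 a ha.1 b hb.1) (hK.2.1 a ha.2 b hb.2)
  · intro a ha r
    exact ⟨⟨(hH.2.2 a ha.1 r).1, (hK.2.2 a ha.2 r).1⟩, ⟨(hH.2.2 a ha.1 r).2, (hK.2.2 a ha.2 r).2⟩⟩

theorem IsPrimeHyperideal.isSemiprimeHyperideal {P : Set R} (hP : IsPrimeHyperideal P) :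
    IsSemiprimeHyperideal P :=
  ⟨hP.1, fun H hH hHH => (hP.2 H H hH hH hHH).elim id id⟩

theorem IsPrimeHyperideal.isStronglyIrreducibleHyperideal {P : Set R}
    (hP : IsPrimeHyperideal P) : IsStronglyIrreducibleHyperideal P :=
  ⟨hP.1, fun H K hH hK hHK =>
    hP.2 H K hH hK ((hProd_subset_inter hH.isRightHyperideal hK.isLeftHyperideal).trans hHK)⟩

theorem IsSemiprimeHyperideal.isPrimeHyperideal {I : Set R} (hsp : IsSemiprimeHyperideal I)
    (hsi : IsStronglyIrreducibleHyperideal I) : IsPrimeHyperideal I := by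
  refine ⟨hsp.1, fun A B hA hB hAB => hsi.2 A B hA hB (hsp.2 (A ∩ B) (hA.inter hB) ?_)⟩
  exact (hProd_mono Set.inter_subset_left Set.inter_subset_right).trans hAB

end Semihyperring

theorem prime_iff_semiprime_and_stronglyIrreducible_general {R : Type*} [Semihyperring R]
    (I : Set R) :
    IsPrimeHyperideal I ↔
      IsSemiprimeHyperideal I ∧ IsStronglyIrreducibleHyperideal I :=
  ⟨fun hP => ⟨hP.isSemiprimeHyperideal, hP.isStronglyIrreducibleHyperideal⟩,
    fun ⟨hsp, hsi⟩ => hsp.isPrimeHyperideal hsi⟩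

/-- a hyperideal is prime iff it is semiprime and strongly irreducible. -/
theorem prime_iff_semiprime_and_stronglyIrreducible {R : Type*} [Semihyperring R]
    (I : Set R) (hI : IsHyperideal I) :
    IsPrimeHyperideal I ↔
      IsSemiprimeHyperideal I ∧ IsStronglyIrreducibleHyperideal I :=
  prime_iff_semiprime_and_stronglyIrreducible_general I
end
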